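/- Let γ > 0, κ ∈ ℝ, and C ⊂ ℝ⁴ a nonempty closed convex cone, and define f(η,ω) = b(η,ω) + κη, where b is the perspective function b(η,ω) = |ω|²/(2η) for η > 0 and ω ∈ C, b(0,0) = 0, and +∞ otherwise. Then for any (η,ω) ∈ ℝ×ℝ⁴ with γκ ≥ η + |P_C ω|²/(2γ), the proximity operator satisfies prox_{γf}(η,ω) = (0,0); otherwise prox_{γf}(η,ω) = (p*, (p*/(p*+γ)) P_C ω) where p* > 0 is the unique positive root of (p + γκ − η)(p + γ)² − (γ/2)|P_C ω|² = 0. -/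

import Mathlib

/-- The objective whose unique minimizer is `prox_{γ f}(η, ω)`. -/
noncomputable def proxObj (γ : ℝ) (f : ℝ × EuclideanSpace ℝ (Fin 4) → EReal)
    (η : ℝ) (ω : EuclideanSpace ℝ (Fin 4)) : ℝ × EuclideanSpace ℝ (Fin 4) → EReal :=
  fun y => (γ : EReal) * f y + ((((y.1 - η) ^ 2 + ‖y.2 - ω‖ ^ 2) / 2 : ℝ) : EReal)

/-- `q` is the unique minimizer of `F`. -/
def isUniqueMin {X : Type*} (F : X → EReal) (q : X) : Prop :=
  (∀ y, F q ≤ F y) ∧ ∀ y, F y ≤ F q → y = q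

/-!
Write `u = P_C ω` and `v = ω - u`; since `C` is a convex cone, `⟪u, v⟫ = 0` and `⟪w, v⟫ ≤ 0` for
`w ∈ C`. Completing the square in `w`, for `p > 0` and `w ∈ C` the objective equals
`φ p + ‖v‖²/2 + (p + γ)/(2p) ‖w - (p/(p + γ)) u‖² - ⟪w, v⟫` with
`φ p = γκp + γ‖u‖²/(2(p + γ)) + (p - η)²/2`, and its value at `(0, 0)` is `φ 0 + ‖v‖²/2`.
So everything reduces to minimizing `φ` on `[0, ∞)`. If `γκ ≥ η + ‖u‖²/(2γ)` then
`φ p ≥ φ 0 + p²/2`. Otherwise the cubic `(p + γ)² φ'(p)` is negative at `0`, hence has a positive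
root `s`, and at any such root `φ p = φ s + (p - s)² ((s + γκ - η)/(p + γ) + 1/2)` with
`s + γκ - η ≥ 0`; thus `s` is the strict minimizer of `φ`, which also makes it the only root.
-/

open RealInnerProductSpace

section ConeProjection

variable {F : Type*} [NormedAddCommGroup F] [InnerProductSpace ℝ F] {K : Set F} {x u : F}

theorem real_inner_sub_le_zero_of_forall_dist_le (hK : Convex ℝ K) (hu : u ∈ K)
    (hmin : ∀ w ∈ K, dist x u ≤ dist x w) : ∀ w ∈ K, ⟪x - u, w - u⟫ ≤ 0 := by
  have : Nonempty K := ⟨⟨u, hu⟩⟩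
  refine (norm_eq_iInf_iff_real_inner_le_zero hK hu).1 (le_antisymm ?_ ?_)
  · exact le_ciInf fun w => by simpa only [dist_eq_norm] using hmin w w.2
  · exact ciInf_le ⟨0, Set.forall_mem_range.2 fun _ => norm_nonneg _⟩ (⟨u, hu⟩ : K)

theorem real_inner_sub_eq_zero_of_cone (hcone : ∀ c : ℝ, 0 ≤ c → ∀ w ∈ K, c • w ∈ K)
    (hu : u ∈ K) (hvi : ∀ w ∈ K, ⟪x - u, w - u⟫ ≤ 0) : ⟪u, x - u⟫ = 0 := by
  have h₀ := hvi 0 (by simpa using hcone 0 le_rfl u hu)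
  have h₂ := hvi ((2 : ℝ) • u) (hcone 2 zero_le_two u hu)
  rw [zero_sub, inner_neg_right] at h₀
  rw [two_smul, add_sub_cancel_right] at h₂
  rw [real_inner_comm]
  linarith

theorem real_inner_sub_nonpos_of_cone (hcone : ∀ c : ℝ, 0 ≤ c → ∀ w ∈ K, c • w ∈ K)
    (hu : u ∈ K) (hvi : ∀ w ∈ K, ⟪x - u, w - u⟫ ≤ 0) {w : F} (hw : w ∈ K) :
    ⟪w, x - u⟫ ≤ 0 := by
  have h := hvi w hw
  rw [inner_sub_right, real_inner_comm u, real_inner_sub_eq_zero_of_cone hcone hu hvi,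
    real_inner_comm] at h
  linarith

end ConeProjection

noncomputable def proxProfile (γ κ η A p : ℝ) : ℝ :=
  γ * κ * p + γ * A / (2 * (p + γ)) + (p - η) ^ 2 / 2

section Profile

variable {γ κ η A : ℝ}

theorem proxProfile_zero_lt (hγ : 0 < γ) (hA : 0 ≤ A) (hcond : η + A / (2 * γ) ≤ γ * κ)
    {p : ℝ} (hp : 0 < p) : proxProfile γ κ η A 0 < proxProfile γ κ η A p := by
  have hdiff : proxProfile γ κ η A p - proxProfile γ κ η A 0
      = p ^ 2 / 2 + p * (γ * κ - η - A / (2 * (p + γ))) := by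
    unfold proxProfile; field_simp; ring
  have hAγ : A / (2 * (p + γ)) ≤ A / (2 * γ) := by gcongr; linarith
  have : 0 ≤ p * (γ * κ - η - A / (2 * (p + γ))) := mul_nonneg hp.le (by linarith)
  linarith [pow_pos hp 2]

theorem nonneg_of_proxRoot (hγ : 0 < γ) (hA : 0 ≤ A) {s : ℝ} (hs : 0 < s)
    (hroot : (s + γ * κ - η) * (s + γ) ^ 2 - γ / 2 * A = 0) : 0 ≤ s + γ * κ - η := by
  have : 0 ≤ (s + γ * κ - η) * (s + γ) ^ 2 := by nlinarith [mul_nonneg hγ.le hA]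
  exact nonneg_of_mul_nonneg_left this (pow_pos (by linarith) 2)

theorem proxProfile_eq_of_root (hγ : 0 < γ) {s p : ℝ} (hp : 0 ≤ p)
    (hroot : (s + γ * κ - η) * (s + γ) ^ 2 - γ / 2 * A = 0) :
    proxProfile γ κ η A p
      = proxProfile γ κ η A s + (p - s) ^ 2 * ((s + γ * κ - η) / (p + γ) + 1 / 2) := by
  have hA : A = 2 * (s + γ * κ - η) * (s + γ) ^ 2 / γ := by
    field_simp; linarith
  unfold proxProfile
  rw [hA]
  field_simp
  ring

theorem proxProfile_lt_of_root (hγ : 0 < γ) (hA : 0 ≤ A) {s p : ℝ} (hs : 0 < s) (hp : 0 ≤ p)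
    (hps : p ≠ s) (hroot : (s + γ * κ - η) * (s + γ) ^ 2 - γ / 2 * A = 0) :
    proxProfile γ κ η A s < proxProfile γ κ η A p := by
  rw [proxProfile_eq_of_root hγ hp hroot, lt_add_iff_pos_right]
  have := div_nonneg (nonneg_of_proxRoot hγ hA hs hroot) (by linarith : 0 ≤ p + γ)
  exact mul_pos (sq_pos_of_ne_zero (sub_ne_zero.2 hps)) (by linarith)

theorem exists_pos_proxRoot (hγ : 0 < γ) (hA : 0 ≤ A) (hcond : γ * κ < η + A / (2 * γ)) :
    ∃ s : ℝ, 0 < s ∧ (s + γ * κ - η) * (s + γ) ^ 2 - γ / 2 * A = 0 := by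
  set g : ℝ → ℝ := fun p => (p + γ * κ - η) * (p + γ) ^ 2 - γ / 2 * A
  have hg0 : g 0 < 0 := by
    have : (γ * κ - η) * (2 * γ) < A := by rw [← lt_div_iff₀ (by positivity)]; linarith
    simp only [g]; nlinarith
  have hK : 0 ≤ γ / 2 * A := by positivity
  set b := |γ * κ - η| + γ / 2 * A + 1 with hb_def
  have hb : 0 < b := by positivity
  have hgb : 0 < g b := by
    have h₁ : γ / 2 * A + 1 ≤ b + γ * κ - η := by linarith [neg_abs_le (γ * κ - η)]
    have h₂ : 1 ≤ (b + γ) ^ 2 := one_le_pow₀ (by linarith [abs_nonneg (γ * κ - η)])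
    simp only [g]
    nlinarith [mul_le_mul h₁ h₂ zero_le_one (by linarith)]
  obtain ⟨s, hs, hroot⟩ := intermediate_value_Ioo hb.le
    (by fun_prop : Continuous g).continuousOn ⟨hg0, hgb⟩
  exact ⟨s, hs.1, hroot⟩

theorem existsUnique_proxRoot (hγ : 0 < γ) (hA : 0 ≤ A) (hcond : γ * κ < η + A / (2 * γ)) :
    ∃! p : ℝ, 0 < p ∧ (p + γ * κ - η) * (p + γ) ^ 2 - γ / 2 * A = 0 := by
  obtain ⟨s, hs, hroot⟩ := exists_pos_proxRoot hγ hA hcond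
  refine ⟨s, ⟨hs, hroot⟩, fun p ⟨hp, hproot⟩ => ?_⟩
  by_contra hps
  exact (proxProfile_lt_of_root hγ hA hs hp.le hps hroot).not_gt
    (proxProfile_lt_of_root hγ hA hp hs.le (Ne.symm hps) hproot)

end Profile

section Objective

variable {F : Type*} [NormedAddCommGroup F] [InnerProductSpace ℝ F] {γ κ η : ℝ} {ω u : F}

def perspectiveDomain (C : Set F) : Set (ℝ × F) :=
  {y | y = (0, 0) ∨ 0 < y.1 ∧ y.2 ∈ C}

/-- On `perspectiveDomain C` this is the prox objective; at `(0, 0)` the junk value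
`‖0‖² / 0 = 0` makes it agree with `f (0, 0) = 0`. -/
noncomputable def proxObjReal (γ κ η : ℝ) (ω : F) (y : ℝ × F) : ℝ :=
  γ * (‖y.2‖ ^ 2 / (2 * y.1) + κ * y.1) + ((y.1 - η) ^ 2 + ‖y.2 - ω‖ ^ 2) / 2

theorem proxObjReal_eq (hγ : 0 < γ) (horth : ⟪u, ω - u⟫ = 0) {p : ℝ} (hp : 0 < p) (w : F) :
    proxObjReal γ κ η ω (p, w) = proxProfile γ κ η (‖u‖ ^ 2) p + ‖ω - u‖ ^ 2 / 2
      + ((p + γ) / (2 * p) * ‖w - (p / (p + γ)) • u‖ ^ 2 - ⟪w, ω - u⟫) := by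
  obtain ⟨v, rfl⟩ : ∃ v, ω = u + v := ⟨ω - u, by abel⟩
  rw [add_sub_cancel_left] at horth ⊢
  have hω : ‖w - (u + v)‖ ^ 2 = ‖w‖ ^ 2 - 2 * (⟪w, u⟫ + ⟪w, v⟫) + (‖u‖ ^ 2 + ‖v‖ ^ 2) := by
    rw [norm_sub_sq_real, inner_add_right, norm_add_sq_real, horth]; ring
  have hw : ‖w - (p / (p + γ)) • u‖ ^ 2
      = ‖w‖ ^ 2 - 2 * (p / (p + γ) * ⟪w, u⟫) + (p / (p + γ)) ^ 2 * ‖u‖ ^ 2 := by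
    rw [norm_sub_sq_real, real_inner_smul_right, norm_smul, Real.norm_eq_abs, mul_pow, sq_abs]
  have : p + γ ≠ 0 := by positivity
  simp only [proxObjReal, proxProfile]
  rw [hω, hw]
  field_simp
  ring

theorem proxObjReal_zero (hγ : 0 < γ) (horth : ⟪u, ω - u⟫ = 0) :
    proxObjReal γ κ η ω (0, 0) = proxProfile γ κ η (‖u‖ ^ 2) 0 + ‖ω - u‖ ^ 2 / 2 := by
  have hω : ‖ω‖ ^ 2 = ‖u‖ ^ 2 + ‖ω - u‖ ^ 2 := by
    rw [sq, sq, sq, ← norm_add_sq_eq_norm_sq_add_norm_sq_real horth, add_sub_cancel]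
  simp only [proxObjReal, proxProfile, zero_sub, norm_neg, hω]
  field_simp
  ring

variable {C : Set F}

theorem proxObjReal_zero_lt (hγ : 0 < γ) (horth : ⟪u, ω - u⟫ = 0)
    (hpolar : ∀ w ∈ C, ⟪w, ω - u⟫ ≤ 0) (hcond : γ * κ ≥ η + ‖u‖ ^ 2 / (2 * γ))
    {y : ℝ × F} (hy : y ∈ perspectiveDomain C) (hne : y ≠ (0, 0)) :
    proxObjReal γ κ η ω (0, 0) < proxObjReal γ κ η ω y := by
  obtain ⟨p, w⟩ := y
  obtain h | ⟨hp, hw⟩ := hy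
  · exact absurd h hne
  rw [proxObjReal_zero hγ horth, proxObjReal_eq hγ horth hp]
  have hprofile := proxProfile_zero_lt hγ (sq_nonneg ‖u‖) hcond hp (κ := κ)
  have hslack : 0 ≤ (p + γ) / (2 * p) * ‖w - (p / (p + γ)) • u‖ ^ 2 := by positivity
  linarith [hpolar w hw]

theorem proxObjReal_lt_of_root (hγ : 0 < γ) (horth : ⟪u, ω - u⟫ = 0)
    (hpolar : ∀ w ∈ C, ⟪w, ω - u⟫ ≤ 0) {s : ℝ} (hs : 0 < s)
    (hroot : (s + γ * κ - η) * (s + γ) ^ 2 - γ / 2 * ‖u‖ ^ 2 = 0)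
    {y : ℝ × F} (hy : y ∈ perspectiveDomain C) (hne : y ≠ (s, (s / (s + γ)) • u)) :
    proxObjReal γ κ η ω (s, (s / (s + γ)) • u) < proxObjReal γ κ η ω y := by
  have hmin : proxObjReal γ κ η ω (s, (s / (s + γ)) • u)
      = proxProfile γ κ η (‖u‖ ^ 2) s + ‖ω - u‖ ^ 2 / 2 := by
    rw [proxObjReal_eq hγ horth hs, sub_self, norm_zero, real_inner_smul_left, horth]
    ring
  have hlt {p : ℝ} (hp : 0 ≤ p) (hps : p ≠ s) :=
    proxProfile_lt_of_root hγ (sq_nonneg ‖u‖) hs hp hps hroot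
  obtain ⟨p, w⟩ := y
  obtain h | ⟨hp, hw⟩ := hy
  · rw [h, hmin, proxObjReal_zero hγ horth]
    linarith [hlt le_rfl hs.ne]
  rw [hmin, proxObjReal_eq hγ horth hp]
  have hslack : 0 ≤ (p + γ) / (2 * p) * ‖w - (p / (p + γ)) • u‖ ^ 2 := by positivity
  by_cases hps : p = s
  · subst hps
    have hw' : w - (p / (p + γ)) • u ≠ 0 := sub_ne_zero.2 fun h => hne (by rw [h])
    have : 0 < (p + γ) / (2 * p) * ‖w - (p / (p + γ)) • u‖ ^ 2 := by positivity
    linarith [hpolar w hw]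
  · linarith [hlt hp.le hps, hpolar w hw]

end Objective

theorem isUniqueMin_of_forall_lt {X : Type*} {F : X → EReal} {q : X}
    (h : ∀ y, y ≠ q → F q < F y) : isUniqueMin F q :=
  ⟨fun y => (eq_or_ne y q).elim (fun hy => hy ▸ le_rfl) fun hy => (h y hy).le,
    fun y hy => by_contra fun hne => (h y hne).not_ge hy⟩

theorem isUniqueMin_proxObj {γ κ η : ℝ} (hγ : 0 < γ) {C : Set (EuclideanSpace ℝ (Fin 4))}
    {f : ℝ × EuclideanSpace ℝ (Fin 4) → EReal}
    (hf₁ : ∀ (η : ℝ) (ω : EuclideanSpace ℝ (Fin 4)), 0 < η → ω ∈ C →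
      f (η, ω) = ((‖ω‖ ^ 2 / (2 * η) + κ * η : ℝ) : EReal))
    (hf₂ : f (0, 0) = 0)
    (hf₃ : ∀ (η : ℝ) (ω : EuclideanSpace ℝ (Fin 4)), ¬ (0 < η ∧ ω ∈ C) →
      (η, ω) ≠ (0, 0) → f (η, ω) = ⊤)
    {ω : EuclideanSpace ℝ (Fin 4)} {q : ℝ × EuclideanSpace ℝ (Fin 4)}
    (hq : q ∈ perspectiveDomain C)
    (hlt : ∀ y ∈ perspectiveDomain C, y ≠ q → proxObjReal γ κ η ω q < proxObjReal γ κ η ω y) :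
    isUniqueMin (proxObj γ f η ω) q := by
  have hfinite : ∀ y ∈ perspectiveDomain C, proxObj γ f η ω y = proxObjReal γ κ η ω y := by
    rintro ⟨p, w⟩ (h | ⟨hp, hw⟩)
    · obtain ⟨rfl, rfl⟩ := Prod.mk.inj h
      simp [proxObj, proxObjReal, hf₂]
    · simp only [proxObj, proxObjReal, hf₁ p w hp hw]
      norm_cast
  refine isUniqueMin_of_forall_lt fun y hne => ?_
  rw [hfinite q hq]
  by_cases hy : y ∈ perspectiveDomain C
  · rw [hfinite y hy]
    exact_mod_cast hlt y hy hne
  · have hfy : f y = ⊤ := hf₃ y.1 y.2 (fun h => hy (Or.inr h)) fun h => hy (Or.inl h)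
    rw [proxObj, hfy, EReal.coe_mul_top_of_pos hγ, EReal.top_add_coe]
    exact EReal.coe_lt_top _

theorem stmt13_general (γ κ : ℝ) (hγ : 0 < γ)
    (C : Set (EuclideanSpace ℝ (Fin 4)))
    (hCconvex : Convex ℝ C)
    (hCcone : ∀ (c : ℝ), 0 ≤ c → ∀ w ∈ C, c • w ∈ C)
    (PC : EuclideanSpace ℝ (Fin 4) → EuclideanSpace ℝ (Fin 4))
    (hPC : ∀ ω, PC ω ∈ C ∧ ∀ w ∈ C, dist ω (PC ω) ≤ dist ω w)
    (f : ℝ × EuclideanSpace ℝ (Fin 4) → EReal)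
    (hf₁ : ∀ (η : ℝ) (ω : EuclideanSpace ℝ (Fin 4)), 0 < η → ω ∈ C →
      f (η, ω) = ((‖ω‖ ^ 2 / (2 * η) + κ * η : ℝ) : EReal))
    (hf₂ : f (0, 0) = 0)
    (hf₃ : ∀ (η : ℝ) (ω : EuclideanSpace ℝ (Fin 4)), ¬ (0 < η ∧ ω ∈ C) →
      (η, ω) ≠ (0, 0) → f (η, ω) = ⊤)
    (η : ℝ) (ω : EuclideanSpace ℝ (Fin 4)) :
    (γ * κ ≥ η + ‖PC ω‖ ^ 2 / (2 * γ) →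
      isUniqueMin (proxObj γ f η ω) ((0 : ℝ), (0 : EuclideanSpace ℝ (Fin 4)))) ∧
    (¬ γ * κ ≥ η + ‖PC ω‖ ^ 2 / (2 * γ) →
      (∃! p : ℝ, 0 < p ∧ (p + γ * κ - η) * (p + γ) ^ 2 - γ / 2 * ‖PC ω‖ ^ 2 = 0) ∧
      ∀ p : ℝ, 0 < p → (p + γ * κ - η) * (p + γ) ^ 2 - γ / 2 * ‖PC ω‖ ^ 2 = 0 →
        isUniqueMin (proxObj γ f η ω) (p, (p / (p + γ)) • PC ω)) := by
  obtain ⟨hu, hmin⟩ := hPC ω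
  have hvi := real_inner_sub_le_zero_of_forall_dist_le hCconvex hu hmin
  have horth := real_inner_sub_eq_zero_of_cone hCcone hu hvi
  have hpolar := fun w => real_inner_sub_nonpos_of_cone hCcone hu hvi (w := w)
  refine ⟨fun hcond => ?_, fun hcond =>
    ⟨existsUnique_proxRoot hγ (sq_nonneg _) (not_le.1 hcond), fun s hs hroot => ?_⟩⟩
  · exact isUniqueMin_proxObj hγ hf₁ hf₂ hf₃ (Or.inl rfl)
      fun y hy hne => proxObjReal_zero_lt hγ horth hpolar hcond hy hne
  · exact isUniqueMin_proxObj hγ hf₁ hf₂ hf₃ (Or.inr ⟨hs, hCcone _ (by positivity) _ hu⟩)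
      fun y hy hne => proxObjReal_lt_of_root hγ horth hpolar hs hroot hy hne

theorem stmt13 (γ κ : ℝ) (hγ : 0 < γ)
    (C : Set (EuclideanSpace ℝ (Fin 4)))
    (hCne : C.Nonempty) (hCclosed : IsClosed C) (hCconvex : Convex ℝ C)
    (hCcone : ∀ (c : ℝ), 0 ≤ c → ∀ w ∈ C, c • w ∈ C)
    (PC : EuclideanSpace ℝ (Fin 4) → EuclideanSpace ℝ (Fin 4))
    (hPC : ∀ ω, PC ω ∈ C ∧ ∀ w ∈ C, dist ω (PC ω) ≤ dist ω w)
    (f : ℝ × EuclideanSpace ℝ (Fin 4) → EReal)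
    (hf₁ : ∀ (η : ℝ) (ω : EuclideanSpace ℝ (Fin 4)), 0 < η → ω ∈ C →
      f (η, ω) = ((‖ω‖ ^ 2 / (2 * η) + κ * η : ℝ) : EReal))
    (hf₂ : f (0, 0) = 0)
    (hf₃ : ∀ (η : ℝ) (ω : EuclideanSpace ℝ (Fin 4)), ¬ (0 < η ∧ ω ∈ C) →
      (η, ω) ≠ (0, 0) → f (η, ω) = ⊤)
    (η : ℝ) (ω : EuclideanSpace ℝ (Fin 4)) :
    (γ * κ ≥ η + ‖PC ω‖ ^ 2 / (2 * γ) →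
      isUniqueMin (proxObj γ f η ω) ((0 : ℝ), (0 : EuclideanSpace ℝ (Fin 4)))) ∧
    (¬ γ * κ ≥ η + ‖PC ω‖ ^ 2 / (2 * γ) →
      (∃! p : ℝ, 0 < p ∧ (p + γ * κ - η) * (p + γ) ^ 2 - γ / 2 * ‖PC ω‖ ^ 2 = 0) ∧
      ∀ p : ℝ, 0 < p → (p + γ * κ - η) * (p + γ) ^ 2 - γ / 2 * ‖PC ω‖ ^ 2 = 0 →
        isUniqueMin (proxObj γ f η ω) (p, (p / (p + γ)) • PC ω)) :=
  stmt13_general γ κ hγ C hCconvex hCcone PC hPC f hf₁ hf₂ hf₃ η ω
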